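/- Let E be a real inner product space, let v_T, a, b ∈ E, and let α_T, α_{T-k}, σ_T, σ_{T-k}, ω_ℓ, ω_w be real scalars with α_T ≠ 0 and α_{T-k} ≠ 0. Suppose e1 = (1 + ω_ℓ)·a − ω_ℓ·b and e2 = (1 + ω_w)·a − ω_w·b, and define v_{T-k} := (α_{T-k}/α_T)·(v_T − σ_T·e1) + σ_{T-k}·e1 and v'_T := (α_T/α_{T-k})·(v_{T-k} − σ_{T-k}·e2) + σ_T·e2. Then v'_T = v_T + κ·g_s, where κ := (ω_ℓ − ω_w)·(α_T·σ_{T-k} − α_{T-k}·σ_T)/α_{T-k} and g_s := a − b. -/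

import Mathlib

/-! The DDIM denoising step and the DDIM inversion step are the same affine map
`x ↦ (α'/α)(x - σ e) + σ' e`, run in opposite directions between the noise levels. Going from
`T` to `T-k` with noise `e₁` and back with noise `e₂` returns `x + ((α σ' - α' σ)/α') (e₁ - e₂)`,
and the two guided predictions differ by `(ωℓ - ωw)(a - b)` because they share the same
conditional and unconditional parts. -/

section GuidedNoise

variable {R M : Type*} [CommRing R] [AddCommGroup M] [Module R M]

/-- Classifier-free guidance with scale `ω`. -/
def guidedNoise (ω : R) (a b : M) : M := (1 + ω) • a - ω • b

theorem guidedNoise_sub_guidedNoise (ω ω' : R) (a b : M) :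
    guidedNoise ω a b - guidedNoise ω' a b = (ω - ω') • (a - b) := by
  simp only [guidedNoise, smul_sub, sub_smul, add_smul, one_smul]
  abel

end GuidedNoise

section DDIM

variable {K M : Type*} [Field K] [AddCommGroup M] [Module K M]

def ddimStep (α α' σ σ' : K) (x e : M) : M := (α' / α) • (x - σ • e) + σ' • e

theorem ddimStep_ddimStep {α α' : K} (hα : α ≠ 0) (hα' : α' ≠ 0) (σ σ' : K) (x e e' : M) :
    ddimStep α' α σ' σ (ddimStep α α' σ σ' x e) e' =
      x + ((α * σ' - α' * σ) / α') • (e - e') := by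
  simp only [ddimStep]
  match_scalars <;> field_simp <;> ring

end DDIM

/-- Theorem 1 (closed form of informative noise via one round of re-denoising),
with exact equality of guided noise predictions. -/
theorem informative_noise_closed_form
    {E : Type*} [NormedAddCommGroup E] [InnerProductSpace ℝ E]
    (vT a b e1 e2 : E) (αT αTk σT σTk ωℓ ωw : ℝ)
    (hαT : αT ≠ 0) (hαTk : αTk ≠ 0)
    (h1 : e1 = (1 + ωℓ) • a - ωℓ • b)
    (h2 : e2 = (1 + ωw) • a - ωw • b)
    (vTk v'T : E)
    (hdenoise : vTk = (αTk / αT) • (vT - σT • e1) + σTk • e1)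
    (hinvert : v'T = (αT / αTk) • (vTk - σTk • e2) + σT • e2) :
    v'T = vT + ((ωℓ - ωw) * (αT * σTk - αTk * σT) / αTk) • (a - b) := by
  calc v'T = ddimStep αTk αT σTk σT (ddimStep αT αTk σT σTk vT e1) e2 := by
        rw [hinvert, hdenoise]; rfl
    _ = vT + ((αT * σTk - αTk * σT) / αTk) • (guidedNoise ωℓ a b - guidedNoise ωw a b) := by
        rw [ddimStep_ddimStep hαT hαTk, h1, h2]; rfl
    _ = vT + ((ωℓ - ωw) * (αT * σTk - αTk * σT) / αTk) • (a - b) := by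
        rw [guidedNoise_sub_guidedNoise, smul_smul, mul_div_assoc, mul_comm]
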